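/- Let α ≥ 0, γ ≥ 1 be real and β ∈ ℂ with 2(γ+α) > |β|. Then for all z in the open unit disc, the Alexander transform of the normalized Rabotnov function satisfies |𝕀[𝓡_{α,β,γ}](z)| ≤ 2(γ+α)/(2(γ+α)−|β|). -/

import Mathlib

open Complex

noncomputable def rabA (α γ : ℝ) (β : ℂ) (n : ℕ) : ℂ :=
  β ^ n * (Real.Gamma (γ + α) : ℂ) / (Real.Gamma ((γ + α) * (n + 1)) : ℂ)

noncomputable def rab (α γ : ℝ) (β : ℂ) (z : ℂ) : ℂ :=
  z + ∑' k : ℕ, rabA α γ β (k + 1) * z ^ (k + 2)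

noncomputable def rabPartial (α γ : ℝ) (β : ℂ) (m : ℕ) (z : ℂ) : ℂ :=
  z + ∑ k ∈ Finset.range m, rabA α γ β (k + 1) * z ^ (k + 2)

noncomputable def rabD (α γ : ℝ) (β : ℂ) (z : ℂ) : ℂ :=
  1 + ∑' k : ℕ, ((k : ℂ) + 2) * rabA α γ β (k + 1) * z ^ (k + 1)

noncomputable def rabDPartial (α γ : ℝ) (β : ℂ) (m : ℕ) (z : ℂ) : ℂ :=
  1 + ∑ k ∈ Finset.range m, ((k : ℂ) + 2) * rabA α γ β (k + 1) * z ^ (k + 1)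

noncomputable def rabAlex (α γ : ℝ) (β : ℂ) (z : ℂ) : ℂ :=
  z + ∑' k : ℕ, rabA α γ β (k + 1) / ((k : ℂ) + 2) * z ^ (k + 2)

noncomputable def rabAlexPartial (α γ : ℝ) (β : ℂ) (m : ℕ) (z : ℂ) : ℂ :=
  z + ∑ k ∈ Finset.range m, rabA α γ β (k + 1) / ((k : ℂ) + 2) * z ^ (k + 2)

/-!
Since `Γ(x + 1) = x Γ(x)` and `Γ` increases on `[2, ∞)`, for `c = γ + α ≥ 1` one gets
`Γ(c (n + 1)) ≥ cⁿ n! Γ(c)`, so `|A_n| ≤ |β|ⁿ / (cⁿ n!)`. Together with `(n + 1)! ≥ 2ⁿ`, the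
coefficients `A_n / (n + 1)` of the Alexander transform are dominated by `qⁿ` with
`q = |β| / (2c) < 1`, and on the unit disc the transform is bounded by `∑ qⁿ = 1 / (1 - q)`.
-/

namespace Real

theorem mul_Gamma_le_Gamma {x y : ℝ} (hx : 1 ≤ x) (hxy : x + 1 ≤ y) :
    x * Gamma x ≤ Gamma y := by
  rw [← Gamma_add_one (by positivity)]
  exact Gamma_strictMonoOn_Ici.monotoneOn (by simp; linarith) (by simp; linarith) hxy

theorem pow_mul_factorial_mul_Gamma_le_Gamma {c : ℝ} (hc : 1 ≤ c) (n : ℕ) :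
    c ^ n * n.factorial * Gamma c ≤ Gamma (c * (n + 1)) := by
  induction n with
  | zero => simp
  | succ n ih =>
    have hcn : 1 ≤ c * (n + 1) := by nlinarith [(n.cast_nonneg : (0 : ℝ) ≤ n)]
    calc c ^ (n + 1) * (n + 1).factorial * Gamma c
        = c * (n + 1) * (c ^ n * n.factorial * Gamma c) := by
          push_cast [Nat.factorial_succ, pow_succ]; ring
      _ ≤ c * (n + 1) * Gamma (c * (n + 1)) := by gcongr
      _ ≤ Gamma (c * ((n + 1 : ℕ) + 1)) := mul_Gamma_le_Gamma hcn (by push_cast; nlinarith)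

end Real

theorem norm_add_tsum_le_inv_one_sub {𝕜 : Type*} [NormedDivisionRing 𝕜] {a : ℕ → 𝕜} {q : ℝ}
    (hq₀ : 0 ≤ q) (hq₁ : q < 1) (ha : ∀ k, ‖a k‖ ≤ q ^ (k + 1)) {z : 𝕜} (hz : ‖z‖ ≤ 1) :
    ‖z + ∑' k, a k * z ^ (k + 2)‖ ≤ (1 - q)⁻¹ := by
  have hgeom : HasSum (fun k : ℕ => q ^ (k + 1)) (q * (1 - q)⁻¹) := by
    simpa only [pow_succ'] using (hasSum_geometric_of_lt_one hq₀ hq₁).mul_left q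
  have hterm (k : ℕ) : ‖a k * z ^ (k + 2)‖ ≤ q ^ (k + 1) := by
    rw [norm_mul, norm_pow]
    exact (mul_le_of_le_one_right (norm_nonneg _) (pow_le_one₀ (norm_nonneg z) hz)).trans (ha k)
  calc ‖z + ∑' k, a k * z ^ (k + 2)‖
      ≤ ‖z‖ + ‖∑' k, a k * z ^ (k + 2)‖ := norm_add_le _ _
    _ ≤ 1 + q * (1 - q)⁻¹ := add_le_add hz (tsum_of_norm_bounded hgeom hterm)
    _ = (1 - q)⁻¹ := by field_simp [(sub_pos.2 hq₁).ne']; ring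

theorem norm_rabA_le {α γ : ℝ} (β : ℂ) (hc : 1 ≤ γ + α) (n : ℕ) :
    ‖rabA α γ β n‖ ≤ ‖β‖ ^ n / ((γ + α) ^ n * n.factorial) := by
  have hΓc : 0 < Real.Gamma (γ + α) := Real.Gamma_pos_of_pos (by linarith)
  have hlb := Real.pow_mul_factorial_mul_Gamma_le_Gamma hc n
  have hΓ : 0 < Real.Gamma ((γ + α) * (n + 1)) := lt_of_lt_of_le (by positivity) hlb
  rw [rabA, norm_div, norm_mul, norm_pow, norm_real, norm_real, Real.norm_of_nonneg hΓc.le,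
    Real.norm_of_nonneg hΓ.le, div_le_div_iff₀ hΓ (by positivity)]
  calc ‖β‖ ^ n * Real.Gamma (γ + α) * ((γ + α) ^ n * n.factorial)
      = ‖β‖ ^ n * ((γ + α) ^ n * n.factorial * Real.Gamma (γ + α)) := by ring
    _ ≤ ‖β‖ ^ n * Real.Gamma ((γ + α) * (n + 1)) := by gcongr

theorem norm_rabA_succ_div_le {α γ : ℝ} (β : ℂ) (hc : 1 ≤ γ + α) (k : ℕ) :
    ‖rabA α γ β (k + 1) / ((k : ℂ) + 2)‖ ≤ (‖β‖ / (2 * (γ + α))) ^ (k + 1) := by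
  have hfac : (2 : ℝ) ^ (k + 1) ≤ (k + 2).factorial := by
    have := Nat.factorial_mul_pow_le_factorial (m := 1) (n := k + 1)
    rw [show 1 + (k + 1) = k + 2 by omega, Nat.factorial_one, one_mul] at this
    exact_mod_cast this
  have hk : ‖(k : ℂ) + 2‖ = k + 2 := by exact_mod_cast norm_natCast (k + 2)
  rw [norm_div, hk, div_pow, mul_pow, div_le_div_iff₀ (by positivity) (by positivity)]
  calc ‖rabA α γ β (k + 1)‖ * (2 ^ (k + 1) * (γ + α) ^ (k + 1))
      ≤ ‖β‖ ^ (k + 1) / ((γ + α) ^ (k + 1) * (k + 1).factorial)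
          * ((k + 2).factorial * (γ + α) ^ (k + 1)) := by
        gcongr
        exact norm_rabA_le β hc (k + 1)
    _ = ‖β‖ ^ (k + 1) * (k + 2) := by
        push_cast [Nat.factorial_succ]
        field_simp
        ring

theorem rabAlex_bound (α γ : ℝ) (β : ℂ) (hα : 0 ≤ α) (hγ : 1 ≤ γ)
    (hβ : ‖β‖ < 2 * (γ + α)) (z : ℂ) (hz : ‖z‖ < 1) :
    ‖rabAlex α γ β z‖ ≤
      2 * (γ + α) / (2 * (γ + α) - ‖β‖) := by
  have hc : 1 ≤ γ + α := by linarith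
  have hq₁ : ‖β‖ / (2 * (γ + α)) < 1 := (div_lt_one (by positivity)).2 hβ
  calc ‖rabAlex α γ β z‖ ≤ (1 - ‖β‖ / (2 * (γ + α)))⁻¹ :=
        norm_add_tsum_le_inv_one_sub (by positivity) hq₁ (norm_rabA_succ_div_le β hc) hz.le
    _ = 2 * (γ + α) / (2 * (γ + α) - ‖β‖) := by
        field_simp [(sub_pos.2 hβ).ne']
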